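/- (Lemma.) The product of the simplex change-of-basis matrix with the transposed simplex matrix satisfies M_n · P_nᵀ = p · [I_n; 0ᵀ], i.e., it equals p times the (n+1)×n matrix consisting of the n×n identity matrix stacked on top of a row of zeros, where p = √(1 + 1/n). -/

import Mathlib

/-- κ = −(1+√(n+1))/n^{3/2} -/
noncomputable def simplexKappa (n : ℕ) : ℝ :=
  -(1 + Real.sqrt (n + 1)) / (n : ℝ) ^ ((3 : ℝ) / 2)

/-- μ = √(1 + 1/n) -/
noncomputable def simplexMu (n : ℕ) : ℝ := Real.sqrt (1 + 1 / n)

/-- The vertices p_1, …, p_{n+1} ∈ ℝ^n of the regular n-simplex (0-indexed by `Fin (n+1)`):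
`p_1 = n^{-1/2}·𝟙` and `p_i = κ·𝟙 + μ·e_{i-1}` for `2 ≤ i ≤ n+1`. -/
noncomputable def simplexVertex (n : ℕ) (i : Fin (n + 1)) : EuclideanSpace ℝ (Fin n) :=
  WithLp.toLp 2 fun j =>
    if (i : ℕ) = 0 then (n : ℝ) ^ (-(1 : ℝ) / 2)
    else simplexKappa n + (if (j : ℕ) = (i : ℕ) - 1 then simplexMu n else 0)

open Matrix

/-- The (n+1)×(n+1) change-of-basis matrix M_n whose i-th column is
m_i = (1/p)·(p_i, n^{-1/2}) with p = √(1 + 1/n). -/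
noncomputable def simplexM (n : ℕ) : Matrix (Fin (n + 1)) (Fin (n + 1)) ℝ :=
  Matrix.of fun j i =>
    (Real.sqrt (1 + 1 / n))⁻¹ *
      (if h : (j : ℕ) < n then simplexVertex n i ⟨j, h⟩ else (n : ℝ) ^ (-(1 : ℝ) / 2))
/-- The n×(n+1) matrix P_n whose i-th column is the simplex vertex p_i. -/
noncomputable def simplexP (n : ℕ) : Matrix (Fin n) (Fin (n + 1)) ℝ :=
  Matrix.of fun j i => simplexVertex n i j

/-! With `a = n^{-1/2}`, the first `n` rows of `M_n` are `p⁻¹` times the rows of `P_n` and the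
last row is the constant `p⁻¹ a`. So `M_n P_nᵀ = p⁻¹ [P_n P_nᵀ; a 𝟙ᵀ P_nᵀ]`, and it suffices that
`P_n P_nᵀ = p² I` and that the vertices sum to zero. Entrywise these come down to
`μ² = p²` and the two scalar identities `a + nκ + μ = 0` and `a² + nκ² + 2κμ = 0`. -/

lemma rpow_neg_one_div_two_eq_inv_sqrt {x : ℝ} (hx : 0 ≤ x) : x ^ (-(1 : ℝ) / 2) = (√x)⁻¹ := by
  rw [neg_div, Real.rpow_neg hx, Real.sqrt_eq_rpow]

lemma rpow_three_div_two_eq_mul_sqrt {x : ℝ} (hx : 0 < x) : x ^ ((3 : ℝ) / 2) = x * √x := by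
  rw [show (3 : ℝ) / 2 = 1 + 1 / 2 by norm_num, Real.rpow_add hx, Real.rpow_one, Real.sqrt_eq_rpow]

lemma sum_const_add_ite_mul_const_add_ite {ι R : Type*} [Fintype ι] [DecidableEq ι] [CommRing R]
    (c d : R) (j k : ι) :
    ∑ i, (c + if j = i then d else 0) * (c + if k = i then d else 0) =
      Fintype.card ι * c * c + 2 * c * d + if j = k then d * d else 0 := by
  simp only [add_mul, mul_add, mul_ite, ite_mul, mul_zero, zero_mul, Finset.sum_add_distrib,
    Finset.sum_ite_eq, Finset.mem_univ, if_true, Finset.sum_const, Finset.card_univ, nsmul_eq_mul]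
  split_ifs <;> ring

lemma simplexKappa_eq {n : ℕ} (hn : 0 < n) :
    simplexKappa n = -(1 + √(n + 1)) / (n * √n) := by
  rw [simplexKappa, rpow_three_div_two_eq_mul_sqrt (by positivity)]

lemma simplexMu_eq {n : ℕ} (hn : 0 < n) : simplexMu n = √(n + 1) / √n := by
  rw [simplexMu, ← Real.sqrt_div' _ (Nat.cast_nonneg n)]
  congr 1
  field_simp

lemma simplexMu_mul_self (n : ℕ) : simplexMu n * simplexMu n = 1 + 1 / n :=
  Real.mul_self_sqrt (by positivity)

lemma simplex_consts_sum_eq_zero {n : ℕ} (hn : 0 < n) :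
    (n : ℝ) ^ (-(1 : ℝ) / 2) + n * simplexKappa n + simplexMu n = 0 := by
  have : 0 < √(n : ℝ) := by positivity
  rw [rpow_neg_one_div_two_eq_inv_sqrt (Nat.cast_nonneg n), simplexKappa_eq hn, simplexMu_eq hn]
  field_simp
  ring

lemma simplex_consts_inner_eq_zero {n : ℕ} (hn : 0 < n) :
    (n : ℝ) ^ (-(1 : ℝ) / 2) * (n : ℝ) ^ (-(1 : ℝ) / 2) + n * simplexKappa n * simplexKappa n
      + 2 * simplexKappa n * simplexMu n = 0 := by
  have : 0 < √(n : ℝ) := by positivity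
  have hs : √((n : ℝ) + 1) * √((n : ℝ) + 1) = n + 1 := Real.mul_self_sqrt (by positivity)
  rw [rpow_neg_one_div_two_eq_inv_sqrt (Nat.cast_nonneg n), simplexKappa_eq hn, simplexMu_eq hn]
  field_simp
  linear_combination (-1 : ℝ) * hs

lemma simplexP_apply_zero (n : ℕ) (j : Fin n) : simplexP n j 0 = (n : ℝ) ^ (-(1 : ℝ) / 2) := by
  simp only [simplexP, simplexVertex, of_apply, Fin.val_zero, if_true]

lemma simplexP_apply_succ (n : ℕ) (j i : Fin n) :
    simplexP n j i.succ = simplexKappa n + if j = i then simplexMu n else 0 := by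
  simp only [simplexP, simplexVertex, of_apply, Fin.val_succ, Nat.add_one_ne_zero, if_false,
    Nat.add_sub_cancel, Fin.val_inj]

lemma sum_simplexP_row {n : ℕ} (hn : 0 < n) (j : Fin n) : ∑ i, simplexP n j i = 0 := by
  simp only [Fin.sum_univ_succ, simplexP_apply_zero, simplexP_apply_succ, Finset.sum_add_distrib,
    Finset.sum_ite_eq, Finset.mem_univ, if_true, Finset.sum_const, Finset.card_univ,
    Fintype.card_fin, nsmul_eq_mul]
  linear_combination simplex_consts_sum_eq_zero hn

lemma simplexP_mul_transpose {n : ℕ} (hn : 0 < n) :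
    simplexP n * (simplexP n)ᵀ = (1 + 1 / n : ℝ) • (1 : Matrix (Fin n) (Fin n) ℝ) := by
  ext j k
  simp only [mul_apply, transpose_apply, Fin.sum_univ_succ, simplexP_apply_zero,
    simplexP_apply_succ, sum_const_add_ite_mul_const_add_ite, Fintype.card_fin, Matrix.smul_apply,
    one_apply, smul_eq_mul, mul_ite, mul_one, mul_zero, simplexMu_mul_self]
  linear_combination simplex_consts_inner_eq_zero hn

lemma simplexM_apply_castSucc (n : ℕ) (j : Fin n) (i : Fin (n + 1)) :
    simplexM n j.castSucc i = (√(1 + 1 / n))⁻¹ * simplexP n j i := by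
  simp [simplexM, simplexP]

lemma simplexM_apply_last (n : ℕ) (i : Fin (n + 1)) :
    simplexM n (Fin.last n) i = (√(1 + 1 / n))⁻¹ * (n : ℝ) ^ (-(1 : ℝ) / 2) := by
  simp [simplexM]

/-- (Lemma.) M_n · P_nᵀ = p · [I_n; 0ᵀ], i.e. p times the (n+1)×n matrix consisting of
the n×n identity stacked on top of a row of zeros, where p = √(1 + 1/n). -/
theorem simplexM_mul_simplexP_transpose (n : ℕ) (hn : 1 ≤ n) :
    simplexM n * (simplexP n)ᵀ =
      Real.sqrt (1 + 1 / n) •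
        (Matrix.of fun (j : Fin (n + 1)) (k : Fin n) =>
          if (j : ℕ) = (k : ℕ) then (1 : ℝ) else 0) := by
  ext j k
  induction j using Fin.lastCases with
  | last =>
    simp [mul_apply, simplexM_apply_last, ← Finset.mul_sum, sum_simplexP_row hn, k.isLt.ne']
  | cast j =>
    have hjk := congrFun₂ (simplexP_mul_transpose hn) j k
    rw [← Real.mul_self_sqrt (by positivity : (0 : ℝ) ≤ 1 + 1 / n)] at hjk
    simp only [mul_apply, transpose_apply, Matrix.smul_apply, one_apply, smul_eq_mul] at hjk
    simp only [mul_apply, transpose_apply, simplexM_apply_castSucc, mul_assoc, ← Finset.mul_sum,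
      hjk, Matrix.smul_apply, of_apply, Fin.val_castSucc, ← Fin.ext_iff, smul_eq_mul]
    field_simp
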